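/- Let α ∈ (0,1] and let V ∈ C²(ℝ) be such that e^{−V} ∈ L¹(ℝ; dx) ∩ C_b²(ℝ). Suppose that limsup_{|x|→∞} |x|³ e^{−V(x)} |V'(x)² − V''(x)| < ∞. Then ∫_ℝ (−Δ)^{α/2} e^{−V(u)} du = 0. -/

import Mathlib

/-!
The operator is `-c_{1,α}` times the Lévy-type integral
`∫ (g(u+z) - g(u) - g'(u) z 𝟙_{|z|≤1}) k(z) dz` with `k(z) = |z|^{-(1+α)}`, and
`∫ min(1, z²) k(z) dz < ∞`. For `g = e^{-V}` the hypothesis on `V'² - V''` says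
`|g''(x)| ≲ (1 + |x|)^{-3}`, so by Taylor's formula the integrand is dominated by
`((1 + |u|)^{-3} + |g(u)| + |g(u+z)|) min(1, z²) k(z)`, which is integrable on `ℝ²`.
Fubini then lets us integrate in `u` first, and for each `z` that integral vanishes:
`∫ g(u+z) du = ∫ g(u) du` by translation invariance, and `∫ g' = 0` because both `g` and `g'`
are integrable.
-/open MeasureTheory Real Filter

/-- The constant `c_{1,α} = 2^α Γ((1+α)/2)/(π^{1/2} |Γ(-α/2)|)`. -/
noncomputable def fracC (α : ℝ) : ℝ :=
  2 ^ α * Real.Gamma ((1 + α) / 2) / (Real.pi ^ ((1 : ℝ) / 2) * |Real.Gamma (-α / 2)|)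

/-- The one-dimensional fractional Laplacian `(-Δ)^{α/2} g`, defined so that
`-(-Δ)^{α/2} g (x) = c_{1,α} ∫ (g(x+z) - g(x) - g'(x) z 1_{|z|≤1}) |z|^{-(1+α)} dz`. -/
noncomputable def fracLap1 (α : ℝ) (g : ℝ → ℝ) (x : ℝ) : ℝ :=
  -(fracC α *
    ∫ z : ℝ, (g (x + z) - g x - deriv g x * z * (if |z| ≤ 1 then 1 else 0)) * |z| ^ (-(1 + α)))

/-- The one-dimensional fractional drift
`b(x) = -e^{V(x)} ∫_{-∞}^x (-Δ)^{α/2} e^{-V(u)} du`. -/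
noncomputable def fracDrift1 (α : ℝ) (V : ℝ → ℝ) (x : ℝ) : ℝ :=
  -Real.exp (V x) * ∫ u in Set.Iic x, fracLap1 α (fun y => Real.exp (-(V y))) u

open Set Metric

theorem abs_sub_sub_deriv_mul_le {g : ℝ → ℝ} (hg : ContDiff ℝ 2 g) {u z B : ℝ}
    (hB : ∀ w ∈ closedBall u |z|, |deriv (deriv g) w| ≤ B) :
    |g (u + z) - g u - deriv g u * z| ≤ B * z ^ 2 := by
  have hg₁ : Differentiable ℝ g := hg.differentiable two_ne_zero
  have hg₂ : Differentiable ℝ (deriv g) := (hg.iterate_deriv' 1 1).differentiable one_ne_zero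
  have hlip : ∀ t ∈ closedBall (0 : ℝ) |z|, ‖deriv g (u + t) - deriv g u‖ ≤ B * |z| := by
    intro t ht
    have ht' : u + t ∈ closedBall u |z| := by simpa [dist_eq] using ht
    calc ‖deriv g (u + t) - deriv g u‖ ≤ B * ‖u + t - u‖ :=
          (convex_closedBall u |z|).norm_image_sub_le_of_norm_deriv_le (fun w _ => hg₂ w)
            (fun w hw => hB w hw) (mem_closedBall_self (abs_nonneg z)) ht'
      _ ≤ B * |z| := by
          have hB0 : 0 ≤ B := (abs_nonneg _).trans (hB u (mem_closedBall_self (abs_nonneg z)))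
          simp only [add_sub_cancel_left, norm_eq_abs]
          exact mul_le_mul_of_nonneg_left (by simpa using ht) hB0
  have hφ : ∀ t ∈ closedBall (0 : ℝ) |z|, HasDerivWithinAt (fun t => g (u + t) - deriv g u * t)
      (deriv g (u + t) - deriv g u) (closedBall 0 |z|) t := by
    intro t _
    have := ((hg₁ (u + t)).hasDerivAt.comp_const_add u t).fun_sub
      ((hasDerivAt_id t).const_mul (deriv g u))
    simpa using this.hasDerivWithinAt
  have := (convex_closedBall (0 : ℝ) |z|).norm_image_sub_le_of_norm_hasDerivWithin_le hφ hlip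
    (mem_closedBall_self (abs_nonneg z)) (y := z) (by simp)
  rw [sub_right_comm]
  simpa [mul_assoc, ← sq] using this

theorem one_add_abs_rpow_neg_le {u w p : ℝ} (hp : 0 ≤ p) (hw : |w - u| ≤ 1) :
    (1 + |w|) ^ (-p) ≤ 2 ^ p * (1 + |u|) ^ (-p) := by
  have hu : (1 + |u|) / 2 ≤ 1 + |w| := by
    have := abs_sub_abs_le_abs_sub u w
    rw [abs_sub_comm] at hw
    linarith [abs_nonneg w]
  calc (1 + |w|) ^ (-p) ≤ ((1 + |u|) / 2) ^ (-p) :=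
        rpow_le_rpow_of_nonpos (by positivity) hu (neg_nonpos.2 hp)
    _ = 2 ^ p * (1 + |u|) ^ (-p) := by
        rw [div_rpow (by positivity) zero_le_two, rpow_neg zero_le_two, div_inv_eq_mul, mul_comm]

theorem exists_abs_le_mul_one_add_abs_rpow_neg {f : ℝ → ℝ} (hf : Continuous f) {p M R : ℝ}
    (hp : 0 ≤ p) (hM : ∀ x, R ≤ |x| → |x| ^ p * |f x| ≤ M) :
    ∃ C, ∀ x, |f x| ≤ C * (1 + |x|) ^ (-p) := by
  set R₁ := max R 1
  obtain ⟨B, hB⟩ := (isCompact_closedBall (0 : ℝ) R₁).exists_bound_of_continuousOn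
    hf.continuousOn
  refine ⟨max ((1 + R₁) ^ p * B) (2 ^ p * M), fun x => ?_⟩
  rw [rpow_neg (by positivity), ← div_eq_mul_inv, le_div_iff₀ (by positivity), mul_comm]
  rcases le_total |x| R₁ with hx | hx
  · refine le_max_of_le_left (mul_le_mul ?_ ?_ (abs_nonneg _) ?_)
    · exact rpow_le_rpow (by positivity) (by linarith) hp
    · simpa using hB x (by simpa using hx)
    · positivity
  · have hx1 : 1 ≤ |x| := (le_max_right R 1).trans hx
    refine le_max_of_le_right ?_
    calc (1 + |x|) ^ p * |f x| ≤ (2 * |x|) ^ p * |f x| :=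
          mul_le_mul_of_nonneg_right (rpow_le_rpow (by positivity) (by linarith) hp)
            (abs_nonneg _)
      _ = 2 ^ p * (|x| ^ p * |f x|) := by rw [mul_rpow zero_le_two (abs_nonneg x), mul_assoc]
      _ ≤ 2 ^ p * M := mul_le_mul_of_nonneg_left (hM x ((le_max_left R 1).trans hx))
          (by positivity)

theorem integrableOn_closedBall_min_one_sq_mul_abs_rpow {α : ℝ} (h2 : α < 2) :
    IntegrableOn (fun z : ℝ => min 1 (z ^ 2) * |z| ^ (-(1 + α))) (closedBall 0 1) := by
  have hdim : (Module.finrank ℝ ℝ : ℝ) = 1 := by simp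
  refine (locallyIntegrable_of_norm_le_rpow (C := 1) (α := α - 1) (by simp) (by rw [hdim]; linarith)
    (Eventually.of_forall fun z => ?_) (by fun_prop)).integrableOn_isCompact
    (isCompact_closedBall 0 1)
  rcases eq_or_ne z 0 with rfl | hz
  · rw [sq, mul_zero, min_eq_right zero_le_one, zero_mul, norm_zero]
    positivity
  · calc ‖min 1 (z ^ 2) * |z| ^ (-(1 + α))‖ = min 1 (z ^ 2) * |z| ^ (-(1 + α)) :=
          Real.norm_of_nonneg (by positivity)
      _ ≤ |z| ^ (2 : ℝ) * |z| ^ (-(1 + α)) := by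
          gcongr
          rw [rpow_two, sq_abs]
          exact min_le_right _ _
      _ = 1 * ‖z‖ ^ (-(α - 1)) := by
          rw [← rpow_add (abs_pos.2 hz), one_mul, norm_eq_abs]
          ring_nf

theorem integrableOn_compl_closedBall_min_one_sq_mul_abs_rpow {α : ℝ} (h0 : 0 < α) :
    IntegrableOn (fun z : ℝ => min 1 (z ^ 2) * |z| ^ (-(1 + α))) (closedBall 0 1)ᶜ := by
  have hdim : (Module.finrank ℝ ℝ : ℝ) = 1 := by simp
  refine ((integrable_one_add_norm (E := ℝ) (r := 1 + α) (by rw [hdim]; linarith)).const_mul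
    (2 ^ (1 + α))).integrableOn.mono' (by fun_prop)
    (ae_restrict_of_forall_mem measurableSet_closedBall.compl fun z hz => ?_)
  have hz : 1 < |z| := by simpa using hz
  calc ‖min 1 (z ^ 2) * |z| ^ (-(1 + α))‖ ≤ 1 * |z| ^ (-(1 + α)) := by
        rw [norm_mul, Real.norm_of_nonneg (by positivity), Real.norm_of_nonneg (by positivity)]
        gcongr
        exact min_le_left _ _
    _ ≤ 1 * ((1 + ‖z‖) / 2) ^ (-(1 + α)) := by
        gcongr 1 * ?_
        refine rpow_le_rpow_of_nonpos (by positivity) ?_ (by linarith)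
        rw [norm_eq_abs]
        linarith
    _ = 2 ^ (1 + α) * (1 + ‖z‖) ^ (-(1 + α)) := by
        rw [div_rpow (by positivity) zero_le_two, rpow_neg zero_le_two, div_inv_eq_mul, one_mul,
          mul_comm]

theorem integrable_min_one_sq_mul_abs_rpow {α : ℝ} (h0 : 0 < α) (h2 : α < 2) :
    Integrable fun z : ℝ => min 1 (z ^ 2) * |z| ^ (-(1 + α)) := by
  rw [← integrableOn_univ, ← union_compl_self (closedBall (0 : ℝ) 1)]
  exact (integrableOn_closedBall_min_one_sq_mul_abs_rpow h2).union
    (integrableOn_compl_closedBall_min_one_sq_mul_abs_rpow h0)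

noncomputable def levyIntegrand (g : ℝ → ℝ) (u z : ℝ) : ℝ :=
  g (u + z) - g u - deriv g u * z * (if |z| ≤ 1 then 1 else 0)

noncomputable def levyGenerator (k g : ℝ → ℝ) (u : ℝ) : ℝ :=
  ∫ z, levyIntegrand g u z * k z

section Decay

variable {g : ℝ → ℝ} {C p : ℝ}

theorem abs_sub_sub_deriv_mul_le_of_decay (hg : ContDiff ℝ 2 g) (hp : 0 ≤ p)
    (hg'' : ∀ x, |deriv (deriv g) x| ≤ C * (1 + |x|) ^ (-p)) {u z : ℝ} (hz : |z| ≤ 1) :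
    |g (u + z) - g u - deriv g u * z| ≤ 2 ^ p * C * (1 + |u|) ^ (-p) * z ^ 2 := by
  have hC : 0 ≤ C := by simpa using (abs_nonneg _).trans (hg'' 0)
  refine abs_sub_sub_deriv_mul_le hg fun w hw => ?_
  have hwu : |w - u| ≤ 1 := (mem_closedBall.1 hw).trans hz
  calc |deriv (deriv g) w| ≤ C * (1 + |w|) ^ (-p) := hg'' w
    _ ≤ C * (2 ^ p * (1 + |u|) ^ (-p)) := by gcongr; exact one_add_abs_rpow_neg_le hp hwu
    _ = 2 ^ p * C * (1 + |u|) ^ (-p) := by ring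

theorem integrable_deriv_of_decay (hg : ContDiff ℝ 2 g) (hgi : Integrable g) (hp : 1 < p)
    (hg'' : ∀ x, |deriv (deriv g) x| ≤ C * (1 + |x|) ^ (-p)) : Integrable (deriv g) := by
  have hrem : Integrable fun u => g (u + 1) - g u - deriv g u * 1 := by
    refine ((integrable_one_add_norm (E := ℝ) (r := p) (by simpa using hp)).const_mul
      (2 ^ p * C)).mono' (by fun_prop) (Eventually.of_forall fun u => ?_)
    simpa using abs_sub_sub_deriv_mul_le_of_decay hg (by linarith) hg'' (u := u) (z := 1) (by simp)
  refine (((hgi.comp_add_right 1).sub hgi).sub hrem).congr (Eventually.of_forall fun u => ?_)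
  simp

theorem abs_levyIntegrand_le (hg : ContDiff ℝ 2 g) (hp : 0 ≤ p)
    (hg'' : ∀ x, |deriv (deriv g) x| ≤ C * (1 + |x|) ^ (-p)) (u z : ℝ) :
    |levyIntegrand g u z| ≤
      (2 ^ p * C * (1 + |u|) ^ (-p) + |g u| + |g (u + z)|) * min 1 (z ^ 2) := by
  have hC : 0 ≤ C := by simpa using (abs_nonneg _).trans (hg'' 0)
  have hD : 0 ≤ 2 ^ p * C * (1 + |u|) ^ (-p) := by positivity
  unfold levyIntegrand
  by_cases hz : |z| ≤ 1
  · have hz2 : z ^ 2 ≤ 1 := by simpa [sq_le_one_iff_abs_le_one] using hz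
    rw [if_pos hz, mul_one, min_eq_right hz2]
    calc _ ≤ 2 ^ p * C * (1 + |u|) ^ (-p) * z ^ 2 :=
          abs_sub_sub_deriv_mul_le_of_decay hg hp hg'' hz
      _ ≤ _ := by gcongr; linarith [abs_nonneg (g u), abs_nonneg (g (u + z))]
  · have hz2 : 1 ≤ z ^ 2 := by
      simpa [one_le_sq_iff_one_le_abs] using (not_le.1 hz).le
    rw [if_neg hz, mul_zero, sub_zero, min_eq_left hz2, mul_one]
    linarith [abs_sub (g (u + z)) (g u)]

theorem integrable_levyIntegrand {k : ℝ → ℝ} (hk_meas : AEStronglyMeasurable k)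
    (hk : Integrable fun z => min 1 (z ^ 2) * k z) (hg : ContDiff ℝ 2 g) (hgi : Integrable g)
    (hp : 1 < p) (hg'' : ∀ x, |deriv (deriv g) x| ≤ C * (1 + |x|) ^ (-p)) :
    Integrable (Function.uncurry fun u z => levyIntegrand g u z * k z) (volume.prod volume) := by
  have hD : Integrable fun u : ℝ => 2 ^ p * C * (1 + |u|) ^ (-p) :=
    (integrable_one_add_norm (E := ℝ) (r := p) (by simpa using hp)).const_mul _
  have hfix : Integrable (fun q : ℝ × ℝ =>
      (2 ^ p * C * (1 + |q.1|) ^ (-p) + |g q.1|) * ‖min 1 (q.2 ^ 2) * k q.2‖)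
      (volume.prod volume) :=
    (hD.add hgi.abs).mul_prod hk.norm
  have hshift : Integrable (fun q : ℝ × ℝ => |g (q.1 + q.2)| * ‖min 1 (q.2 ^ 2) * k q.2‖)
      (volume.prod volume) :=
    (measurePreserving_add_prod volume volume).integrable_comp_of_integrable
      (hgi.abs.mul_prod hk.norm)
  refine (hfix.add hshift).mono' ?_ (Eventually.of_forall fun ⟨u, z⟩ => ?_)
  · have hcont : Continuous fun q : ℝ × ℝ => g (q.1 + q.2) - g q.1 := by
      have := hg.continuous; fun_prop
    have hcut : Measurable fun q : ℝ × ℝ => deriv g q.1 * q.2 * (if |q.2| ≤ 1 then 1 else 0) :=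
      ((hg.continuous_deriv one_le_two).measurable.comp measurable_fst).mul measurable_snd |>.mul
        (Measurable.ite (measurableSet_le (by fun_prop) measurable_const) measurable_const
          measurable_const)
    exact (hcont.aestronglyMeasurable.sub hcut.aestronglyMeasurable).mul hk_meas.comp_snd
  · simp only [Pi.add_apply, Function.uncurry_apply_pair, norm_mul, Real.norm_eq_abs,
      abs_of_nonneg (le_min zero_le_one (sq_nonneg z)), ← add_mul, ← mul_assoc]
    exact mul_le_mul_of_nonneg_right (abs_levyIntegrand_le hg (by linarith) hg'' u z)
      (abs_nonneg _)

theorem integral_levyGenerator_eq_zero {k : ℝ → ℝ} (hk_meas : AEStronglyMeasurable k)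
    (hk : Integrable fun z => min 1 (z ^ 2) * k z) (hg : ContDiff ℝ 2 g) (hgi : Integrable g)
    (hp : 1 < p) (hg'' : ∀ x, |deriv (deriv g) x| ≤ C * (1 + |x|) ^ (-p)) :
    ∫ u, levyGenerator k g u = 0 := by
  have hg'i := integrable_deriv_of_decay hg hgi hp hg''
  have hg'0 : ∫ u, deriv g u = 0 := integral_eq_zero_of_hasDerivAt_of_integrable
    (fun x => (hg.differentiable two_ne_zero x).hasDerivAt) hg'i hgi
  unfold levyGenerator
  rw [integral_integral_swap (integrable_levyIntegrand hk_meas hk hg hgi hp hg'')]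
  refine integral_eq_zero_of_ae (Eventually.of_forall fun z => ?_)
  have hdiff : Integrable fun u => g (u + z) - g u := (hgi.comp_add_right z).sub hgi
  simp only [levyIntegrand, Pi.zero_apply]
  rw [integral_mul_const, integral_sub hdiff ((hg'i.mul_const _).mul_const _),
    integral_sub (hgi.comp_add_right z) hgi, integral_add_right_eq_self, integral_mul_const,
    integral_mul_const, hg'0]
  ring

end Decay

theorem deriv_exp_neg {V : ℝ → ℝ} (hV : Differentiable ℝ V) :
    deriv (fun y => exp (-V y)) = fun x => -deriv V x * exp (-V x) := by
  funext x
  simpa [mul_comm] using ((hV x).hasDerivAt.neg.exp).deriv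

theorem deriv_deriv_exp_neg {V : ℝ → ℝ} (hV : ContDiff ℝ 2 V) (x : ℝ) :
    deriv (deriv fun y => exp (-V y)) x = (deriv V x ^ 2 - deriv (deriv V) x) * exp (-V x) := by
  have hV₁ : Differentiable ℝ V := hV.differentiable two_ne_zero
  have hV₂ : Differentiable ℝ (deriv V) := (hV.iterate_deriv' 1 1).differentiable one_ne_zero
  rw [deriv_exp_neg hV₁, ((hV₂ x).hasDerivAt.fun_neg.fun_mul (hV₁ x).hasDerivAt.fun_neg.exp).deriv]
  ring

theorem stmt_10_general (α : ℝ) (hα : α ∈ Set.Ioc (0 : ℝ) 1)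
    (V : ℝ → ℝ) (hV : ContDiff ℝ 2 V)
    (hL1 : Integrable (fun x => Real.exp (-(V x))))
    (hlim : ∃ M R : ℝ, ∀ x : ℝ, R ≤ |x| →
      |x| ^ 3 * Real.exp (-(V x)) * |(deriv V x) ^ 2 - deriv (deriv V) x| ≤ M) :
    ∫ u : ℝ, fracLap1 α (fun y => Real.exp (-(V y))) u = 0 := by
  obtain ⟨M, R, hM⟩ := hlim
  set g : ℝ → ℝ := fun y => exp (-V y)
  have hg : ContDiff ℝ 2 g := hV.neg.exp
  obtain ⟨C, hC⟩ : ∃ C, ∀ x, |deriv (deriv g) x| ≤ C * (1 + |x|) ^ (-(3 : ℝ)) := by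
    have hg'' : Continuous (deriv (deriv g)) := (hg.iterate_deriv' 1 1).continuous_deriv le_rfl
    refine exists_abs_le_mul_one_add_abs_rpow_neg (M := M) (R := R) hg'' (by norm_num)
      fun x hx => ?_
    rw [deriv_deriv_exp_neg hV, abs_mul, abs_of_pos (exp_pos _), rpow_ofNat, ← mul_assoc,
      mul_right_comm]
    exact hM x hx
  have hk := integrable_min_one_sq_mul_abs_rpow hα.1 (by linarith [hα.2])
  calc ∫ u, fracLap1 α g u
      = -(fracC α * ∫ u, levyGenerator (fun z => |z| ^ (-(1 + α))) g u) := by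
        rw [← integral_const_mul, ← integral_neg]
        rfl
    _ = 0 := by
        have hk_meas : Measurable fun z : ℝ => |z| ^ (-(1 + α)) := by fun_prop
        rw [integral_levyGenerator_eq_zero hk_meas.aestronglyMeasurable hk hg hL1 (by norm_num) hC,
          mul_zero, neg_zero]

theorem stmt_10 (α : ℝ) (hα : α ∈ Set.Ioc (0 : ℝ) 1)
    (V : ℝ → ℝ) (hV : ContDiff ℝ 2 V)
    (hL1 : Integrable (fun x => Real.exp (-(V x))))
    (hCb2 : ∃ M : ℝ, ∀ x : ℝ, Real.exp (-(V x)) ≤ M ∧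
      |deriv (fun y => Real.exp (-(V y))) x| ≤ M ∧
      |deriv (deriv (fun y => Real.exp (-(V y)))) x| ≤ M)
    (hlim : ∃ M R : ℝ, ∀ x : ℝ, R ≤ |x| →
      |x| ^ 3 * Real.exp (-(V x)) * |(deriv V x) ^ 2 - deriv (deriv V) x| ≤ M) :
    ∫ u : ℝ, fracLap1 α (fun y => Real.exp (-(V y))) u = 0 :=
  stmt_10_general α hα V hV hL1 hlim
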